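/- If ℓ does not have the gap property (its binary expansion contains two consecutive set bits), then there exists r ≤ ℓ with C(ℓ,r) odd such that the set D(ℓ−r) = { a₁^{r₁+r₃} a₂^{r₁+r₂} (a₁+a₂)^{r₂+r₃} : r₁+r₂+r₃ = ℓ−r, multinomial coefficient odd } is linearly dependent over 𝔽₂ in 𝔽₂[a₁,a₂]. -/

import Mathlib

open MvPolynomial

noncomputable section

abbrev R2 : Type := MvPolynomial (Fin 2) (ZMod 2)
def a1 : R2 := X 0
def a2 : R2 := X 1

def D (m : ℕ) : Set R2 :=
  {p | ∃ r₁ r₂ r₃ : ℕ, r₁ + r₂ + r₃ = m ∧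
    Odd (m.factorial / (r₁.factorial * r₂.factorial * r₃.factorial)) ∧
    p = a1 ^ (r₁ + r₃) * a2 ^ (r₁ + r₂) * (a1 + a2) ^ (r₂ + r₃)}

def LinIndepF2 (S : Set R2) : Prop :=
  ∀ T : Finset R2, ↑T ⊆ S → T.Nonempty → ∑ x ∈ T, x ≠ 0

def GapProp (n : ℕ) : Prop :=
  ∀ i : ℕ, ¬(n.testBit i = true ∧ n.testBit (i + 1) = true)

/-! If bits `s` and `s + 1` of `ℓ` are set, take `r = ℓ - 3 * 2 ^ s`. The bits of `3 * 2 ^ s` are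
among those of `ℓ`, so Lucas' theorem makes `C(ℓ, r) = C(ℓ, 3 * 2 ^ s)` odd. In characteristic 2
the four elements of `D 3` indexed by `(2,1,0), (2,0,1), (1,0,2), (0,1,2)` sum to zero, hence so do
their `2 ^ s`-th powers. These are distinct elements of `D (3 * 2 ^ s)`: their multinomial
coefficients all equal `C(3 * 2 ^ s, 2 ^ s)`, which is odd by Lucas again. -/

theorem Nat.odd_choose_of_testBit_imp {n k : ℕ}
    (h : ∀ i, k.testBit i = true → n.testBit i = true) : Odd (n.choose k) := by
  induction n using Nat.strong_induction_on generalizing k with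
  | _ n ih =>
    rcases n.eq_zero_or_pos with rfl | hn
    · simp [Nat.eq_zero_of_le_zero (Nat.le_of_testBit h)]
    have hhigh : Odd ((n / 2).choose (k / 2)) :=
      ih _ (by omega) fun i hi => by rw [Nat.testBit_div_two] at hi ⊢; exact h _ hi
    have hlow : (n % 2).choose (k % 2) = 1 := by
      have h₀ := h 0
      simp only [Nat.testBit_zero, decide_eq_true_eq] at h₀
      rcases Nat.mod_two_eq_zero_or_one k with hk | hk
      · simp [hk]
      · simp [hk, h₀ hk]
    have lucas := @Choose.choose_modEq_choose_mod_mul_choose_div_nat n k 2 ⟨Nat.prime_two⟩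
    rw [hlow, one_mul] at lucas
    rw [Nat.odd_iff] at hhigh ⊢
    rw [lucas, hhigh]

theorem Nat.testBit_three_mul_two_pow {s i : ℕ} :
    (3 * 2 ^ s).testBit i = true ↔ i = s ∨ i = s + 1 := by
  rw [mul_comm, Nat.testBit_two_pow_mul]
  rcases lt_or_ge i s with hi | hi
  · simp only [ge_iff_le, hi.not_ge, decide_false, Bool.false_and, Bool.false_eq_true, false_iff]
    omega
  obtain ⟨j, rfl⟩ := Nat.exists_eq_add_of_le hi
  rcases j with _ | _ | j
  · simp
  · simp [Nat.testBit_succ]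
  · have : (3 : ℕ).testBit (j + 2) = false :=
      Nat.testBit_lt_two_pow (by rw [pow_add]; have := Nat.one_le_two_pow (n := j); omega)
    simp [this]

theorem Nat.testBit_imp_of_three_mul_two_pow {n s : ℕ} (h₀ : n.testBit s = true)
    (h₁ : n.testBit (s + 1) = true) :
    ∀ i, (3 * 2 ^ s).testBit i = true → n.testBit i = true := by
  intro i hi
  rcases Nat.testBit_three_mul_two_pow.mp hi with rfl | rfl <;> assumption

open Polynomial in
theorem Polynomial.natDegree_X_pow_mul_X_add_one_pow {R : Type*} [Semiring R] [Nontrivial R]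
    (k m : ℕ) : ((Polynomial.X : R[X]) ^ k * (Polynomial.X + 1) ^ m).natDegree = k + m := by
  have hX1 : (Polynomial.X + 1 : R[X]).Monic := by simpa using monic_X_add_C (1 : R)
  rw [(monic_X_pow k).natDegree_mul (hX1.pow m), hX1.natDegree_pow, natDegree_X_pow,
    show (Polynomial.X + 1 : R[X]).natDegree = 1 by simpa using natDegree_X_add_C (1 : R),
    mul_one]

def dTerm (r : ℕ × ℕ × ℕ) : R2 :=
  a1 ^ (r.1 + r.2.2) * a2 ^ (r.1 + r.2.1) * (a1 + a2) ^ (r.2.1 + r.2.2)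

theorem dTerm_smul (b : ℕ) (r : ℕ × ℕ × ℕ) : dTerm (b • r) = dTerm r ^ b := by
  simp only [dTerm, Prod.smul_fst, Prod.smul_snd, smul_eq_mul, mul_pow, ← pow_mul]
  ring

open Polynomial in
theorem aeval_dTerm (p q : (ZMod 2)[X]) (r : ℕ × ℕ × ℕ) :
    MvPolynomial.aeval ![p, q] (dTerm r) =
      p ^ (r.1 + r.2.2) * q ^ (r.1 + r.2.1) * (p + q) ^ (r.2.1 + r.2.2) := by
  simp [dTerm, a1, a2]

open Polynomial in
theorem dTerm_injective : Function.Injective dTerm := by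
  rintro ⟨r₁, r₂, r₃⟩ ⟨t₁, t₂, t₃⟩ h
  -- The specialisations `a₂ = 1`, `a₁ = 1`, `a₂ = a₁ + 1` have degrees
  -- `r₁ + r₂ + 2r₃`, `r₁ + 2r₂ + r₃`, `2r₁ + r₂ + r₃`, which determine the triple.
  have deg (p q : (ZMod 2)[X]) := congrArg (fun f => (MvPolynomial.aeval ![p, q] f).natDegree) h
  have h₁ := deg Polynomial.X 1
  have h₂ := deg 1 Polynomial.X
  have h₃ := deg Polynomial.X (Polynomial.X + 1)
  have hsum : (Polynomial.X + (Polynomial.X + 1) : (ZMod 2)[X]) = 1 := by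
    rw [← add_assoc, CharTwo.add_self_eq_zero, zero_add]
  simp only [aeval_dTerm, one_pow, mul_one, one_mul, add_comm (1 : (ZMod 2)[X]), hsum,
    natDegree_X_pow_mul_X_add_one_pow] at h₁ h₂ h₃
  simp only [Prod.mk.injEq]
  omega

def dependentTriples : Finset (ℕ × ℕ × ℕ) := {(2, 1, 0), (2, 0, 1), (1, 0, 2), (0, 1, 2)}

theorem sum_dTerm_dependentTriples : ∑ r ∈ dependentTriples, dTerm r = 0 := by
  have h2 : (2 : R2) = 0 := CharTwo.two_eq_zero
  rw [dependentTriples, Finset.sum_insert (by decide), Finset.sum_insert (by decide),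
    Finset.sum_insert (by decide), Finset.sum_singleton]
  simp only [dTerm]
  linear_combination (a1 ^ 2 * a2 * (a1 + a2) ^ 3) * h2

theorem dTerm_two_pow_smul_mem_D (s : ℕ) {r : ℕ × ℕ × ℕ} (hr : r ∈ dependentTriples) :
    dTerm (2 ^ s • r) ∈ D (3 * 2 ^ s) := by
  have hchoose :
      Odd ((2 ^ s * 2 + 2 ^ s).factorial / ((2 ^ s * 2).factorial * (2 ^ s).factorial)) := by
    rw [← Nat.add_choose, show 2 ^ s * 2 + 2 ^ s = 3 * 2 ^ s by ring]
    refine Nat.odd_choose_of_testBit_imp fun i hi => ?_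
    rw [Nat.testBit_two_pow, decide_eq_true_eq] at hi
    exact Nat.testBit_three_mul_two_pow.mpr (Or.inl hi.symm)
  rw [show 3 * 2 ^ s = 2 ^ s * 2 + 2 ^ s by ring]
  simp only [dependentTriples, Finset.mem_insert, Finset.mem_singleton] at hr
  rcases hr with rfl | rfl | rfl | rfl <;>
    exact ⟨_, _, _, by simp only [Prod.smul_mk, smul_eq_mul]; ring,
      by simpa [mul_comm (2 ^ s).factorial] using hchoose, rfl⟩

theorem not_linIndepF2_D_three_mul_two_pow (s : ℕ) : ¬ LinIndepF2 (D (3 * 2 ^ s)) := by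
  intro hindep
  have hinj : Set.InjOn (fun r => dTerm (2 ^ s • r)) dependentTriples := fun r _ t _ h =>
    smul_right_injective _ (pow_ne_zero s two_ne_zero) (dTerm_injective h)
  refine hindep (dependentTriples.image fun r => dTerm (2 ^ s • r)) ?_
    (by simp [dependentTriples]) ?_
  · rw [Finset.coe_image, Set.image_subset_iff]
    exact fun r hr => dTerm_two_pow_smul_mem_D s hr
  · rw [Finset.sum_image hinj]
    simp only [dTerm_smul, ← sum_pow_char_pow, sum_dTerm_dependentTriples]
    exact zero_pow (pow_ne_zero s two_ne_zero)

theorem stmt_18 (ℓ : ℕ) (hgap : ¬ GapProp ℓ) :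
    ∃ r : ℕ, r ≤ ℓ ∧ Odd (ℓ.choose r) ∧ ¬ LinIndepF2 (D (ℓ - r)) := by
  obtain ⟨s, hs₀, hs₁⟩ : ∃ s, ℓ.testBit s = true ∧ ℓ.testBit (s + 1) = true := by
    simpa [GapProp] using hgap
  have hbits := Nat.testBit_imp_of_three_mul_two_pow hs₀ hs₁
  have hle : 3 * 2 ^ s ≤ ℓ := Nat.le_of_testBit hbits
  refine ⟨ℓ - 3 * 2 ^ s, Nat.sub_le _ _, ?_, ?_⟩
  · rw [Nat.choose_symm hle]
    exact Nat.odd_choose_of_testBit_imp hbits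
  · rw [Nat.sub_sub_self hle]
    exact not_linIndepF2_D_three_mul_two_pow s
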